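/- arXiv:1406.4768 — 3 statements merged into one kernel-verified Lean document; each statement's English description precedes it below -/
import Mathlib

section
/- Let h > 0, and for n ≥ 1 set μ_n = (2n-1)π/(2h). Let k > 0 with k ≠ μ_n for all n, and let M be such that μ_M < k < μ_{M+1} (assume M ≥ 1). Define ξ_n = √(k² - μ_n²) for n ≤ M. Then Σ_{n=1}^{M} 1/(h ξ_n) ≤ 1/(h ξ_M) + 1/2. -/
/-! With `aₙ = μₙ / k`, the gaps `aₙ₊₁ - aₙ = π / (h k)` are constant and `√(1 - aₙ²) = ξₙ / k`, so
`π / (h ξₙ) = (aₙ₊₁ - aₙ) / √(1 - aₙ²)` is a left Riemann sum term for `∫ dt / √(1 - t²)`. Since the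
integrand increases on `[0, 1)`, the terms with `n < M` sum to at most `arcsin a_M - arcsin a₁ ≤ π / 2`. -/

open Real Finset

namespace Real

theorem sub_div_sqrt_one_sub_sq_le_arcsin_sub {a b : ℝ} (ha : 0 ≤ a) (hab : a ≤ b) (hb : b ≤ 1) :
    (b - a) / √(1 - a ^ 2) ≤ arcsin b - arcsin a := by
  have hderiv : ∀ x ∈ interior (Set.Icc a b), 1 / √(1 - a ^ 2) ≤ deriv arcsin x := by
    rw [interior_Icc]
    rintro x ⟨hax, hxb⟩
    have hx : 0 < 1 - x ^ 2 := by nlinarith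
    rw [deriv_arcsin]
    exact one_div_le_one_div_of_le (sqrt_pos.2 hx) (sqrt_le_sqrt (by nlinarith))
  have hdiff : DifferentiableOn ℝ arcsin (interior (Set.Icc a b)) := by
    rw [interior_Icc]
    rintro x ⟨hax, hxb⟩
    exact (differentiableAt_arcsin.2 ⟨by linarith, by linarith⟩).differentiableWithinAt
  have := (convex_Icc a b).mul_sub_le_image_sub_of_le_deriv continuous_arcsin.continuousOn hdiff
    hderiv a (Set.left_mem_Icc.2 hab) b (Set.right_mem_Icc.2 hab) hab
  rwa [one_div_mul_eq_div] at this

theorem sum_Ico_sub_div_sqrt_one_sub_sq_le_pi_div_two {a : ℕ → ℝ} {m n : ℕ} (ha : Monotone a)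
    (hm : 0 ≤ a m) (hn : a n ≤ 1) :
    ∑ i ∈ Ico m n, (a (i + 1) - a i) / √(1 - a i ^ 2) ≤ π / 2 := by
  rcases lt_or_ge n m with hnm | hmn
  · rw [Ico_eq_empty_of_le hnm.le, sum_empty]
    positivity
  calc ∑ i ∈ Ico m n, (a (i + 1) - a i) / √(1 - a i ^ 2)
      ≤ ∑ i ∈ Ico m n, (arcsin (a (i + 1)) - arcsin (a i)) := by
        refine sum_le_sum fun i hi ↦ ?_
        obtain ⟨hmi, hin⟩ := mem_Ico.1 hi
        exact sub_div_sqrt_one_sub_sq_le_arcsin_sub (hm.trans (ha hmi)) (ha i.le_succ)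
          ((ha hin).trans hn)
    _ = arcsin (a n) - arcsin (a m) := sum_Ico_sub (fun i ↦ arcsin (a i)) hmn
    _ ≤ π / 2 - 0 := sub_le_sub (arcsin_le_pi_div_two _) (arcsin_nonneg.2 hm)
    _ = π / 2 := sub_zero _

end Real

theorem propagating_mode_sum_bound_general
    (h k : ℝ) (hh : 0 < h) (hk : 0 < k) (M : ℕ) (hM : 1 ≤ M)
    (μ : ℕ → ℝ) (hμ : ∀ n : ℕ, μ n = (2 * n - 1) * Real.pi / (2 * h))
    (hkM : μ M < k)
    (ξ : ℕ → ℝ) (hξ : ∀ n : ℕ, ξ n = Real.sqrt (k ^ 2 - μ n ^ 2)) :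
    ∑ n ∈ Finset.Icc 1 M, 1 / (h * ξ n) ≤ 1 / (h * ξ M) + 1 / 2 := by
  have hμ_mono : Monotone fun n ↦ μ n / k := fun m n hmn ↦ by
    simp only [hμ]
    gcongr
  have hμ_succ : ∀ n : ℕ, μ (n + 1) / k - μ n / k = π / (h * k) := fun n ↦ by
    rw [hμ, hμ]
    field_simp
    push_cast
    ring
  have hξ_div : ∀ n : ℕ, √(1 - (μ n / k) ^ 2) = ξ n / k := fun n ↦ by
    rw [hξ, ← sqrt_sq hk.le, ← sqrt_div' _ (sq_nonneg k), sqrt_sq hk.le]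
    field_simp
  have hterm : ∀ n : ℕ, 1 / (h * ξ n) =
      (μ (n + 1) / k - μ n / k) / √(1 - (μ n / k) ^ 2) / π := fun n ↦ by
    rw [hμ_succ, hξ_div]
    field_simp
  have hμ_one : 0 ≤ μ 1 / k := by
    rw [hμ, Nat.cast_one, two_mul, add_sub_cancel_right, one_mul]
    positivity
  have hsum : ∑ n ∈ Ico 1 M, 1 / (h * ξ n) ≤ 1 / 2 := by
    simp only [hterm, ← sum_div]
    rw [div_le_iff₀ pi_pos, one_div_mul_eq_div]
    exact sum_Ico_sub_div_sqrt_one_sub_sq_le_pi_div_two hμ_mono hμ_one ((div_le_one hk).2 hkM.le)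
  rw [← Ico_add_one_right_eq_Icc, sum_Ico_succ_top hM]
  linarith

theorem propagating_mode_sum_bound
    (h k : ℝ) (hh : 0 < h) (hk : 0 < k) (M : ℕ) (hM : 1 ≤ M)
    (μ : ℕ → ℝ) (hμ : ∀ n : ℕ, μ n = (2 * n - 1) * Real.pi / (2 * h))
    (hknot : ∀ n : ℕ, 1 ≤ n → k ≠ μ n)
    (hkM : μ M < k) (hkM1 : k < μ (M + 1))
    (ξ : ℕ → ℝ) (hξ : ∀ n : ℕ, ξ n = Real.sqrt (k ^ 2 - μ n ^ 2)) :
    ∑ n ∈ Finset.Icc 1 M, 1 / (h * ξ n) ≤ 1 / (h * ξ M) + 1 / 2 :=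
  propagating_mode_sum_bound_general h k hh hk M hM μ hμ hkM ξ hξ
end

section
/- Let h > 0, μ_n = (2n-1)π/(2h), k > 0 with μ_M < k < μ_{M+1}, and |ξ_n| = √(μ_n² - k²) for n ≥ M+1. If r ≥ α h for some α > 0, then Σ_{n=M+1}^{∞} (1/(h|ξ_n|)) e^{-|ξ_n| r} ≤ 1/(h|ξ_{M+1}|) + 1/(α k h π). -/
/-!
Since `μ_{M+1+m} = μ_{M+1} + mπ/h` with `μ_{M+1} > k`, we get `ξ_{M+1+m}² ≥ 2kπm/h =: cm`. As
`t ↦ e^{-rt}/t` decreases, the term of index `m + 1` is at most `e^{-rb}/b` with `b = √(c(m+1))`.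
For `a = √(cm)` we have `b² - a² = c`, so `b - a ≥ c/(2b)`, and the convexity bound
`e^{-ra} - e^{-rb} ≥ r(b-a)e^{-rb}` makes `e^{-rb}/b` at most `2/(cr)` times a telescoping
difference. Hence everything after the first term sums to at most `(1/h)·2/(cr) = 1/(kπr)`,
and `r ≥ αh` finishes.
-/

open Real Finset

lemma mul_sub_mul_exp_neg_le_exp_neg_sub (a b r : ℝ) :
    r * (b - a) * exp (-b * r) ≤ exp (-a * r) - exp (-b * r) := by
  have hsplit : exp (-b * r) * exp (r * (b - a)) = exp (-a * r) := by
    rw [← exp_add]; ring_nf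
  nlinarith [mul_le_mul_of_nonneg_left (add_one_le_exp (r * (b - a))) (exp_pos (-b * r)).le]

lemma exp_neg_sqrt_div_sqrt_le_sub {c r : ℝ} (hc : 0 < c) (hr : 0 < r) (m : ℕ) :
    exp (-√(c * (m + 1)) * r) / √(c * (m + 1)) ≤
      2 / (c * r) * (exp (-√(c * m) * r) - exp (-√(c * (m + 1)) * r)) := by
  set a := √(c * m)
  set b := √(c * (m + 1))
  have hb : 0 < b := sqrt_pos.2 (by positivity)
  have hab : a ≤ b := sqrt_le_sqrt (by nlinarith)
  have hsq : b ^ 2 - a ^ 2 = c := by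
    rw [sq_sqrt (by positivity), sq_sqrt (by positivity)]; ring
  have hgap : c / (2 * b) ≤ b - a := by
    rw [div_le_iff₀ (by positivity)]; nlinarith [sqrt_nonneg (c * m)]
  calc exp (-b * r) / b = 2 / (c * r) * (r * (c / (2 * b)) * exp (-b * r)) := by
        field_simp
    _ ≤ 2 / (c * r) * (r * (b - a) * exp (-b * r)) := by gcongr
    _ ≤ 2 / (c * r) * (exp (-a * r) - exp (-b * r)) := by
        gcongr; exact mul_sub_mul_exp_neg_le_exp_neg_sub a b r

lemma sum_range_le_of_le_sub_succ {f w : ℕ → ℝ} (h : ∀ m, f m ≤ w m - w (m + 1))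
    (hw : ∀ m, 0 ≤ w m) (n : ℕ) : ∑ i ∈ range n, f i ≤ w 0 := by
  calc ∑ i ∈ range n, f i ≤ ∑ i ∈ range n, (w i - w (i + 1)) := sum_le_sum fun i _ ↦ h i
    _ = w 0 - w n := sum_range_sub' w n
    _ ≤ w 0 := sub_le_self _ (hw n)

lemma summable_exp_neg_sqrt_div_sqrt_and_tsum_le {c r : ℝ} (hc : 0 < c) (hr : 0 < r) :
    Summable (fun m : ℕ ↦ exp (-√(c * (m + 1)) * r) / √(c * (m + 1))) ∧
      ∑' m : ℕ, exp (-√(c * (m + 1)) * r) / √(c * (m + 1)) ≤ 2 / (c * r) := by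
  have hsum := sum_range_le_of_le_sub_succ
    (f := fun m : ℕ ↦ exp (-√(c * (m + 1)) * r) / √(c * (m + 1)))
    (w := fun m : ℕ ↦ 2 / (c * r) * exp (-√(c * m) * r))
    (fun m ↦ by rw [← mul_sub]; push_cast; exact exp_neg_sqrt_div_sqrt_le_sub hc hr m)
    (fun m ↦ by positivity)
  simp only [CharP.cast_eq_zero, mul_zero, sqrt_zero, neg_zero, zero_mul, exp_zero,
    mul_one] at hsum
  have hs := summable_of_sum_range_le (fun m ↦ by positivity) hsum
  exact ⟨hs, hs.tsum_le_of_sum_range_le hsum⟩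

lemma tsum_exp_neg_mul_div_le_of_sqrt_mul_le {c r : ℝ} (hc : 0 < c) (hr : 0 < r) {ξ : ℕ → ℝ}
    (hξ : ∀ m : ℕ, √(c * m) ≤ ξ m) :
    ∑' m, exp (-ξ m * r) / ξ m ≤ 1 / ξ 0 + 2 / (c * r) := by
  obtain ⟨hg, hg_le⟩ := summable_exp_neg_sqrt_div_sqrt_and_tsum_le hc hr
  have hξ_nonneg (m : ℕ) : 0 ≤ ξ m := (sqrt_nonneg _).trans (hξ m)
  have hhead : exp (-ξ 0 * r) / ξ 0 ≤ 1 / ξ 0 :=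
    div_le_div_of_nonneg_right (exp_le_one_iff.2 (by nlinarith [hξ_nonneg 0])) (hξ_nonneg 0)
  have htail (m : ℕ) :
      exp (-ξ (m + 1) * r) / ξ (m + 1) ≤ exp (-√(c * (m + 1)) * r) / √(c * (m + 1)) := by
    have := hξ (m + 1)
    push_cast at this
    gcongr
  have hs_tail : Summable fun m ↦ exp (-ξ (m + 1) * r) / ξ (m + 1) :=
    hg.of_nonneg_of_le (fun m ↦ by have := hξ_nonneg (m + 1); positivity) htail
  calc ∑' m, exp (-ξ m * r) / ξ m
      = exp (-ξ 0 * r) / ξ 0 + ∑' m, exp (-ξ (m + 1) * r) / ξ (m + 1) :=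
        ((summable_nat_add_iff 1).1 hs_tail).tsum_eq_zero_add
    _ ≤ 1 / ξ 0 + 2 / (c * r) :=
        add_le_add hhead ((hs_tail.tsum_le_tsum htail hg).trans hg_le)

theorem evanescent_tail_bound_general
    (h k r α : ℝ) (hh : 0 < h) (hk : 0 < k) (hα : 0 < α) (hr : r ≥ α * h)
    (M : ℕ)
    (μ : ℕ → ℝ) (hμ : ∀ n : ℕ, μ n = (2 * n - 1) * Real.pi / (2 * h))
    (hkM1 : k < μ (M + 1))
    (ξabs : ℕ → ℝ) (hξ : ∀ n : ℕ, M + 1 ≤ n → ξabs n = Real.sqrt (μ n ^ 2 - k ^ 2)) :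
    ∑' m : ℕ, (1 / (h * ξabs (M + 1 + m))) * Real.exp (-(ξabs (M + 1 + m)) * r)
      ≤ 1 / (h * ξabs (M + 1)) + 1 / (α * k * h * Real.pi) := by
  have hr0 : 0 < r := lt_of_lt_of_le (by positivity) hr
  have hc : 0 < 2 * k * π / h := by positivity
  have hξ_ge (m : ℕ) : √(2 * k * π / h * m) ≤ ξabs (M + 1 + m) := by
    have hμ_shift : μ (M + 1 + m) = μ (M + 1) + m * π / h := by
      rw [hμ, hμ]; push_cast; field_simp; ring
    rw [hξ _ (by omega), hμ_shift, show 2 * k * π / h * m = 2 * k * (m * π / h) by ring]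
    exact sqrt_le_sqrt (by nlinarith [show 0 ≤ m * π / h by positivity])
  calc ∑' m : ℕ, 1 / (h * ξabs (M + 1 + m)) * exp (-ξabs (M + 1 + m) * r)
      = 1 / h * ∑' m : ℕ, exp (-ξabs (M + 1 + m) * r) / ξabs (M + 1 + m) := by
        rw [← tsum_mul_left]; exact tsum_congr fun m ↦ by ring
    _ ≤ 1 / h * (1 / ξabs (M + 1 + 0) + 2 / (2 * k * π / h * r)) := by
        gcongr; exact tsum_exp_neg_mul_div_le_of_sqrt_mul_le hc hr0 hξ_ge
    _ = 1 / (h * ξabs (M + 1)) + 1 / (k * π * r) := by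
        field_simp
    _ ≤ 1 / (h * ξabs (M + 1)) + 1 / (α * k * h * π) := by
        gcongr 1 / (h * ξabs (M + 1)) + ?_
        exact one_div_le_one_div_of_le (by positivity) (by nlinarith [mul_pos hk pi_pos])

theorem evanescent_tail_bound
    (h k r α : ℝ) (hh : 0 < h) (hk : 0 < k) (hα : 0 < α) (hr : r ≥ α * h)
    (M : ℕ)
    (μ : ℕ → ℝ) (hμ : ∀ n : ℕ, μ n = (2 * n - 1) * Real.pi / (2 * h))
    (hkM : μ M < k) (hkM1 : k < μ (M + 1))
    (ξabs : ℕ → ℝ) (hξ : ∀ n : ℕ, M + 1 ≤ n → ξabs n = Real.sqrt (μ n ^ 2 - k ^ 2)) :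
    ∑' m : ℕ, (1 / (h * ξabs (M + 1 + m))) * Real.exp (-(ξabs (M + 1 + m)) * r)
      ≤ 1 / (h * ξabs (M + 1)) + 1 / (α * k * h * Real.pi) :=
  evanescent_tail_bound_general h k r α hh hk hα hr M μ hμ hkM1 ξabs hξ
end

section
/- Let ξ = ξ₁ − i k γ with ξ₁ ≥ kγ, γ ∈ (0, 1/√π], k > 0, and μ = √(k² − ξ²) with Re√ ≥ 0, μ = μ₁ + iμ₂. Then μ₂ ≥ ξ₁ γ / √(1 + γ²) ≥ ξ₁ γ / √2. -/
/-!
Write `z = k² - ξ²`, so that `μ = √z`. Since `(‖z‖ - Re z)(‖z‖ + Re z) = (Im z)²` and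
`Im √z = √((‖z‖ - Re z) / 2)`, any upper bound `M` on `‖z‖ + Re z` gives the lower bound
`Im √z ≥ Im z / √(2M)`. On the horizontal line `Im ξ = -kγ` the triangle inequality gives
`‖z‖ + Re z ≤ 2(k² + (kγ)²)`, while `Im z = 2ξ₁kγ`; this yields `μ₂ ≥ ξ₁γ / √(1 + γ²)`.
The second inequality only needs `γ ≤ 1`, which holds because `γ ≤ 1/√π`.
-/

open Complex

namespace Complex

theorem sq_im_div_le_norm_sub_re {z : ℂ} {M : ℝ} (hM : 0 < M) (h : ‖z‖ + z.re ≤ M) :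
    z.im ^ 2 / M ≤ ‖z‖ - z.re := by
  have hfactor : z.im ^ 2 = (‖z‖ - z.re) * (‖z‖ + z.re) := by
    rw [← sq_norm_sub_sq_re]; ring
  rw [div_le_iff₀ hM, hfactor]
  exact mul_le_mul_of_nonneg_left h (sub_nonneg.mpr (re_le_norm z))

theorem im_div_sqrt_le_im_cpow_inv_two {z : ℂ} {M : ℝ} (him : 0 ≤ z.im) (hM : 0 < M)
    (h : ‖z‖ + z.re ≤ M) : z.im / Real.sqrt (2 * M) ≤ (z ^ (2⁻¹ : ℂ)).im := by
  rw [cpow_inv_two_im_eq_sqrt him, ← Real.sqrt_sq him, ← Real.sqrt_div' _ (by positivity)]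
  apply Real.sqrt_le_sqrt
  rw [mul_comm 2 M, ← div_div]
  exact div_le_div_of_nonneg_right (sq_im_div_le_norm_sub_re hM h) zero_le_two

theorem norm_sq_sub_sq_add_re_le (k : ℝ) (ξ : ℂ) :
    ‖(k : ℂ) ^ 2 - ξ ^ 2‖ + ((k : ℂ) ^ 2 - ξ ^ 2).re ≤ 2 * (k ^ 2 + ξ.im ^ 2) := by
  have hnorm : ‖(k : ℂ) ^ 2 - ξ ^ 2‖ ≤ k ^ 2 + (ξ.re ^ 2 + ξ.im ^ 2) := by
    calc ‖(k : ℂ) ^ 2 - ξ ^ 2‖ ≤ ‖(k : ℂ) ^ 2‖ + ‖ξ ^ 2‖ := norm_sub_le _ _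
      _ = k ^ 2 + (ξ.re ^ 2 + ξ.im ^ 2) := by
        rw [norm_pow, norm_pow, norm_real, Real.norm_eq_abs, sq_abs, ← normSq_eq_norm_sq, normSq_apply]
        ring
  have hre : ((k : ℂ) ^ 2 - ξ ^ 2).re = k ^ 2 - ξ.re ^ 2 + ξ.im ^ 2 := by
    simp only [sub_re, pow_two, mul_re, ofReal_re, ofReal_im]; ring
  linarith

end Complex

theorem sip_horizontal_sqrt_im_lower_bound
    (k γ ξ₁ : ℝ) (hk : 0 < k) (hγ0 : 0 < γ) (hγ1 : γ ≤ 1 / Real.sqrt Real.pi)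
    (hξ₁ : k * γ ≤ ξ₁)
    (ξ μ : ℂ) (hξ : ξ = (ξ₁ : ℂ) - I * k * γ)
    (hμ : μ = ((k : ℂ) ^ 2 - ξ ^ 2) ^ ((1 : ℂ) / 2)) :
    μ.im ≥ ξ₁ * γ / Real.sqrt (1 + γ ^ 2) ∧
    ξ₁ * γ / Real.sqrt (1 + γ ^ 2) ≥ ξ₁ * γ / Real.sqrt 2 := by
  have hξ₁_pos : 0 < ξ₁ := (mul_pos hk hγ0).trans_le hξ₁
  have hξ_im : ξ.im = -(k * γ) := by simp [hξ]
  have hz_im : ((k : ℂ) ^ 2 - ξ ^ 2).im = 2 * ξ₁ * (k * γ) := by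
    simp [hξ, pow_two]; ring
  have hbound := im_div_sqrt_le_im_cpow_inv_two (hz_im ▸ by positivity) (by positivity)
    (norm_sq_sub_sq_add_re_le k ξ)
  have hsqrt : Real.sqrt (2 * (2 * (k ^ 2 + ξ.im ^ 2))) = 2 * k * Real.sqrt (1 + γ ^ 2) := by
    rw [hξ_im, show 2 * (2 * (k ^ 2 + (-(k * γ)) ^ 2)) = (2 * k) ^ 2 * (1 + γ ^ 2) by ring,
      Real.sqrt_mul (by positivity), Real.sqrt_sq (by positivity)]
  rw [hz_im, hsqrt, ← one_div, ← hμ] at hbound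
  have hγ_le_one : γ ≤ 1 :=
    hγ1.trans (div_le_one_of_le₀ (Real.one_le_sqrt.mpr (by linarith [Real.pi_gt_three]))
      (Real.sqrt_nonneg _))
  refine ⟨le_of_eq_of_le ?_ hbound, ?_⟩
  · field_simp
  · gcongr
    nlinarith
end
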